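/- arXiv:2509.06083 — 2 statements merged into one kernel-verified Lean document; each statement's English description precedes it below -/
import Mathlib

section
/- Let d > 0, let ρ ∈ (0, 1) (the normalized density ahead of vehicle p in the target lane, with ρ^max = 1), let λ ∈ [0, 1], and let x_p, x_s be real numbers with x_s − x_p = d/ρ (the headway corresponding to density ρ). Define the post-lane-change position x_new = λ·(x_s − d) + (1−λ)·(x_p + d). Then λ + (1−2λ)ρ > 0, x_new − x_p > 0, and the new local density satisfies d/(x_new − x_p) = ρ / (λ + (1−2λ)ρ) = ρ + A·ρ, where A = (λ + (1−2λ)ρ)^{−1} − 1 is the amplification factor. -/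
/-- Gain scenario of a lane change: if the headway between the follower `p` and
the leader `s` corresponds to the normalized density `ρ ∈ (0,1)` (i.e.
`x_s − x_p = d/ρ`), and the entering vehicle is placed at the convex combination
`x_new = λ(x_s − d) + (1−λ)(x_p + d)` with `λ ∈ [0,1]`, then
`λ + (1−2λ)ρ > 0`, `x_new − x_p > 0`, and the new local density satisfies
`d/(x_new − x_p) = ρ/(λ + (1−2λ)ρ) = ρ + A·ρ` with amplification factor
`A = (λ + (1−2λ)ρ)⁻¹ − 1`. -/
theorem gain_scenario_density (d lam xp xs ρ : ℝ) (hd : 0 < d)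
    (hρ : ρ ∈ Set.Ioo (0 : ℝ) 1) (hlam : lam ∈ Set.Icc (0 : ℝ) 1)
    (hx : xs - xp = d / ρ) :
    0 < lam + (1 - 2 * lam) * ρ
    ∧ 0 < (lam * (xs - d) + (1 - lam) * (xp + d)) - xp
    ∧ d / ((lam * (xs - d) + (1 - lam) * (xp + d)) - xp)
        = ρ / (lam + (1 - 2 * lam) * ρ)
    ∧ ρ / (lam + (1 - 2 * lam) * ρ)
        = ρ + ((lam + (1 - 2 * lam) * ρ)⁻¹ - 1) * ρ := by
  obtain ⟨hρ0, hρ1⟩ := hρ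
  obtain ⟨hl0, hl1⟩ := hlam
  have hpos : 0 < lam + (1 - 2 * lam) * ρ := by nlinarith [mul_nonneg hl0 (sub_nonneg.mpr hρ1.le), mul_nonneg (sub_nonneg.mpr hl1) hρ0.le]
  have hkey : (lam * (xs - d) + (1 - lam) * (xp + d)) - xp
      = d / ρ * (lam + (1 - 2 * lam) * ρ) := by
    have hxs : xs = xp + d / ρ := by linarith
    rw [hxs]
    field_simp
    ring
  have hnew : 0 < (lam * (xs - d) + (1 - lam) * (xp + d)) - xp := by
    rw [hkey]; positivity
  refine ⟨hpos, hnew, ?_, ?_⟩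
  · rw [hkey]
    field_simp
  · field_simp
    ring
end

section
/- Let η ≥ 0, μ ∈ ℝ, and let ρ, ρ′, v, v′ be real numbers with v ≥ 0 and v′ ≥ 0. Define 𝟙_lc(r, a, b) = max{0, min{sign(b − (1+η)·a), sign(μ − r)}}, where sign is the real sign function. If the indicator for a lane change from lane j to lane j′ is positive, i.e. 𝟙_lc(ρ′, v, v′) > 0, then the indicator for the reverse lane change vanishes, i.e. 𝟙_lc(ρ, v′, v) = 0. Consequently, at any state at most one of the two lane-change probabilities π^{j→j′} = g(ρ)·𝟙_lc(ρ′, v, v′) and π^{j′→j} = g(ρ′)·𝟙_lc(ρ, v′, v) can be strictly positive. -/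
/-- If the lane-change indicator from lane `j` (density `ρ`, velocity `v`) to lane
`j′` (density `ρ′`, velocity `v′`) is positive, then the indicator for the reverse
lane change vanishes; consequently, for any nonnegative factor `g`, at most one of
the two lane-change probabilities `g(ρ)·𝟙_lc(ρ′,v,v′)` and `g(ρ′)·𝟙_lc(ρ,v′,v)`
can be strictly positive. Here
`𝟙_lc(r,a,b) = max{0, min{sign(b − (1+η)a), sign(μ − r)}}`, `η ≥ 0`, `v, v′ ≥ 0`. -/
theorem lane_change_exclusive (η μ ρ ρ' v v' : ℝ) (hη : 0 ≤ η) (hv : 0 ≤ v)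
    (hv' : 0 ≤ v') :
    (0 < max 0 (min (Real.sign (v' - (1 + η) * v)) (Real.sign (μ - ρ'))) →
      max 0 (min (Real.sign (v - (1 + η) * v')) (Real.sign (μ - ρ))) = 0)
    ∧ ∀ g : ℝ → ℝ, (∀ x, 0 ≤ g x) →
        ¬(0 < g ρ * max 0 (min (Real.sign (v' - (1 + η) * v)) (Real.sign (μ - ρ')))
          ∧ 0 < g ρ' * max 0 (min (Real.sign (v - (1 + η) * v')) (Real.sign (μ - ρ)))) := by
  have key : (0 < max 0 (min (Real.sign (v' - (1 + η) * v)) (Real.sign (μ - ρ'))) →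
      max 0 (min (Real.sign (v - (1 + η) * v')) (Real.sign (μ - ρ))) = 0) := by
    intro h
    have hm := (lt_max_iff.mp h).resolve_left (lt_irrefl 0)
    have h1 : 0 < Real.sign (v' - (1 + η) * v) := lt_of_lt_of_le hm (min_le_left _ _)
    have h2 : 0 < v' - (1 + η) * v := by
      by_contra hc
      push_neg at hc
      rcases eq_or_lt_of_le hc with he | hl
      · rw [he, Real.sign_zero] at h1; exact lt_irrefl 0 h1
      · rw [Real.sign_of_neg hl] at h1; linarith
    have h3 : v - (1 + η) * v' < 0 := by nlinarith
    have h4 : Real.sign (v - (1 + η) * v') = -1 := Real.sign_of_neg h3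
    rw [h4, max_eq_left]
    exact le_trans (min_le_left _ _) (by norm_num)
  refine ⟨key, fun g hg ⟨ha, hb⟩ => ?_⟩
  have h1 : 0 < max 0 (min (Real.sign (v' - (1 + η) * v)) (Real.sign (μ - ρ'))) :=
    (mul_pos_iff.mp ha).elim (fun h => h.2) (fun h => absurd h.2 (not_lt.mpr (le_max_left _ _)))
  rw [key h1, mul_zero] at hb
  exact lt_irrefl 0 hb
end
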